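/- arXiv:1202.4075 — 3 statements merged into one kernel-verified Lean document; each statement's English description precedes it below -/
import Mathlib

section
/- In misère Max-Welter, a position (a_1, ..., a_k) with k ≥ 2 has misère Sprague-Grundy value 1 if and only if a_k = a_{k-1} + 1 and a_{k-1} + k is even. -/
/-- A move in Max-Welter: the coin on the largest occupied square moves to an
empty square strictly to its left. -/
def MWMove (s t : Finset ℕ) : Prop :=
  ∃ (hs : s.Nonempty) (j : ℕ), j < s.max' hs ∧ j ∉ s ∧
    t = insert j (s.erase (s.max' hs))

theorem MWMove.sum_lt {s t : Finset ℕ} (h : MWMove s t) :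
    t.sum id < s.sum id := by
  obtain ⟨hs, j, hj, hjs, rfl⟩ := h
  have hm : s.max' hs ∈ s := s.max'_mem hs
  have hje : j ∉ s.erase (s.max' hs) := fun hc => hjs (Finset.mem_of_mem_erase hc)
  have h2 : (s.erase (s.max' hs)).sum id + s.max' hs = s.sum id :=
    Finset.sum_erase_add s id hm
  rw [Finset.sum_insert hje]
  simp only [id] at *
  omega

/-- Normal-play Sprague-Grundy value of a Max-Welter position. -/
noncomputable def grundy (s : Finset ℕ) : ℕ :=
  sInf {n : ℕ | ∀ t, ∀ _h : MWMove s t, grundy t ≠ n}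
termination_by s.sum id
decreasing_by exact _h.sum_lt

open Classical in
/-- Misère Sprague-Grundy value: terminal positions get value 1. -/
noncomputable def mgrundy (s : Finset ℕ) : ℕ :=
  if ∀ t, ¬ MWMove s t then 1
  else sInf {n : ℕ | ∀ t, ∀ _h : MWMove s t, mgrundy t ≠ n}
termination_by s.sum id
decreasing_by exact _h.sum_lt

/-- Normal play: `s` is a P-position iff every move leads to a non-P-position. -/
def MWPPos (s : Finset ℕ) : Prop :=
  ∀ t, ∀ _h : MWMove s t, ¬ MWPPos t
termination_by s.sum id
decreasing_by exact _h.sum_lt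

/-- Misère play: the player to move wins iff there is no move (the opponent made
the last move and loses), or some move leads to a position losing for the opponent. -/
def MWMisereWin (s : Finset ℕ) : Prop :=
  (∀ t, ¬ MWMove s t) ∨ ∃ t, ∃ _h : MWMove s t, ¬ MWMisereWin t
termination_by s.sum id
decreasing_by exact _h.sum_lt


-- basic helpers
lemma le_M {s : Finset ℕ} {x : ℕ} (hx : x ∈ s) : x ≤ s.sup id := Finset.le_sup (f := id) hx

lemma max'_eq_M (s : Finset ℕ) (h : s.Nonempty) : s.max' h = s.sup id := by
  rw [Finset.max'_eq_sup', Finset.sup'_eq_sup]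

lemma M_mem {s : Finset ℕ} (h : s.Nonempty) : s.sup id ∈ s := by
  rw [← max'_eq_M s h]; exact s.max'_mem h

lemma one_le_M {s : Finset ℕ} (h2 : 2 ≤ s.card) : 1 ≤ s.sup id := by
  obtain ⟨a, ha, b, hb, hab⟩ := Finset.one_lt_card.mp (show 1 < s.card by omega)
  have := le_M ha; have := le_M hb; omega

lemma sup_range (n : ℕ) : (Finset.range n).sup id = n - 1 := by
  rcases Nat.eq_zero_or_pos n with h | h
  · simp [h]
  · refine le_antisymm (Finset.sup_le fun x hx => ?_) ?_
    · have := Finset.mem_range.mp hx; simp [id]; omega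
    · exact le_M (Finset.mem_range.mpr (by omega))

lemma M_special (n : ℕ) : (insert n (Finset.range (n - 1))).sup id = n := by
  rw [Finset.sup_insert, sup_range]; simp [id]; omega

lemma erase_ne (s : Finset ℕ) (h2 : 2 ≤ s.card) : (s.erase (s.sup id)).Nonempty := by
  rw [← Finset.card_pos, Finset.card_erase_of_mem (M_mem (Finset.card_pos.mp (by omega)))]
  omega

lemma mkMove {s : Finset ℕ} (h2 : 2 ≤ s.card) {j : ℕ} (hj : j < s.sup id) (hjs : j ∉ s) :
    MWMove s (insert j (s.erase (s.sup id))) := by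
  have hne : s.Nonempty := Finset.card_pos.mp (by omega)
  exact ⟨hne, j, by rw [max'_eq_M]; exact hj, hjs, by rw [max'_eq_M]⟩

lemma move_spec {s t : Finset ℕ} (h : MWMove s t) (h2 : 2 ≤ s.card) :
    ∃ j, j < s.sup id ∧ j ∉ s ∧ t = insert j (s.erase (s.sup id)) ∧ t.card = s.card ∧
      t.sup id = max j ((s.erase (s.sup id)).sup id) := by
  obtain ⟨hs, j, hj, hjs, rfl⟩ := h
  rw [max'_eq_M s hs] at *
  refine ⟨j, hj, hjs, rfl, ?_, ?_⟩
  · rw [Finset.card_insert_of_notMem (fun hc => hjs (Finset.mem_of_mem_erase hc)),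
      Finset.card_erase_of_mem (M_mem hs)]
    have : 1 ≤ s.card := Finset.card_pos.mpr hs
    omega
  · rw [Finset.sup_insert]; rfl

lemma erase_sup_lt {s : Finset ℕ} (h2 : 2 ≤ s.card) : (s.erase (s.sup id)).sup id < s.sup id := by
  have h := M_mem (erase_ne s h2)
  have h1 := Finset.ne_of_mem_erase h
  have h3 := le_M (Finset.mem_of_mem_erase h)
  omega

lemma erase_sup_of_mem {s : Finset ℕ} (h2 : 2 ≤ s.card) (hm1 : s.sup id - 1 ∈ s) :
    (s.erase (s.sup id)).sup id = s.sup id - 1 := by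
  have h1 := one_le_M h2
  refine le_antisymm (by have := erase_sup_lt h2; omega) ?_
  exact le_M (Finset.mem_erase.mpr ⟨by omega, hm1⟩)

lemma no_move_iff {s : Finset ℕ} (h2 : 2 ≤ s.card) :
    (∀ t, ¬ MWMove s t) ↔ ∀ j < s.sup id, j ∈ s := by
  constructor
  · intro h j hj
    by_contra hjs
    exact h _ (mkMove h2 hj hjs)
  · rintro h t ⟨hs, j, hj, hjs, rfl⟩
    rw [max'_eq_M s hs] at hj
    exact hjs (h j hj)

lemma terminal_eq {s : Finset ℕ} (h2 : 2 ≤ s.card) (ht : ∀ j < s.sup id, j ∈ s) :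
    s = Finset.range s.card ∧ s.sup id = s.card - 1 := by
  have hne : s.Nonempty := Finset.card_pos.mp (by omega)
  set m := s.sup id with hm
  have hs : s = Finset.range (m + 1) := by
    ext x
    simp only [Finset.mem_range]
    constructor
    · intro hx; have := le_M hx; omega
    · intro hx
      rcases Nat.lt_or_ge x m with h | h
      · exact ht x h
      · have : x = m := by omega
        rw [this]; exact M_mem hne
  have hcard : s.card = m + 1 := by rw [hs, Finset.card_range]
  constructor
  · rw [hcard]; exact hs
  · omega

/-- misère value 0 positions -/
def PA (s : Finset ℕ) : Prop :=
  (s.sup id - 1 ∈ s ∧ Even (s.sup id + s.card)) ∨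
    s = insert s.card (Finset.range (s.card - 1))

/-- misère value 1 positions -/
def PB (s : Finset ℕ) : Prop :=
  s.sup id - 1 ∈ s ∧ Odd (s.sup id + s.card)

lemma special_card {k : ℕ} (hk : 1 ≤ k) : (insert k (Finset.range (k - 1))).card = k := by
  rw [Finset.card_insert_of_notMem (by simp only [Finset.mem_range]; omega),
    Finset.card_range]
  omega

lemma special_sup {s : Finset ℕ} (h2 : 2 ≤ s.card)
    (hsp : s = insert s.card (Finset.range (s.card - 1))) : s.sup id = s.card := by
  conv_lhs => rw [hsp]
  exact M_special s.card

lemma special_sup_sub_one_notMem {s : Finset ℕ} (h2 : 2 ≤ s.card)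
    (hsp : s = insert s.card (Finset.range (s.card - 1))) : s.sup id - 1 ∉ s := by
  rw [special_sup h2 hsp]
  set k := s.card with hk
  intro hc
  rw [hsp] at hc
  rcases Finset.mem_insert.mp hc with h | h
  · omega
  · have := Finset.mem_range.mp h; omega

lemma move_card {s t : Finset ℕ} (h : MWMove s t) (h2 : 2 ≤ s.card) : t.card = s.card := by
  obtain ⟨j, _, _, _, hc, _⟩ := move_spec h h2
  exact hc

lemma down_or_packed {s : Finset ℕ} (h2 : 2 ≤ s.card) (hm1 : s.sup id - 1 ∉ s) :
    (∃ t, MWMove s t ∧ t.card = s.card ∧ t.sup id = (s.erase (s.sup id)).sup id ∧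
      (s.erase (s.sup id)).sup id - 1 ∈ t) ∨
    (s = insert (s.sup id) (Finset.range ((s.erase (s.sup id)).sup id + 1)) ∧
      s.card = (s.erase (s.sup id)).sup id + 2) := by
  have hne : s.Nonempty := Finset.card_pos.mp (by omega)
  have h1M := one_le_M h2
  set e := s.erase (s.sup id) with he
  have hene : e.Nonempty := erase_ne s h2
  set m' := e.sup id with hm'
  have hm'e : m' ∈ e := M_mem hene
  have hm's : m' ∈ s := Finset.mem_of_mem_erase hm'e
  have hm'ne : m' ≠ s.sup id := Finset.ne_of_mem_erase hm'e
  have hm'le : m' ≤ s.sup id := le_M hm's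
  have hm'2 : m' + 2 ≤ s.sup id := by
    rcases Nat.lt_or_ge (m' + 2) (s.sup id + 1) with h | h
    · omega
    · exfalso; have : m' = s.sup id - 1 := by omega
      exact hm1 (this ▸ hm's)
  -- membership in e
  have hmeme : ∀ x, x ∈ e ↔ (x ∈ s ∧ x ≠ s.sup id) := by
    intro x; rw [he, Finset.mem_erase]; tauto
  have hle_m' : ∀ x ∈ s, x ≠ s.sup id → x ≤ m' := by
    intro x hx hxne
    exact le_M ((hmeme x).mpr ⟨hx, hxne⟩)
  by_cases hA : m' - 1 ∈ s
  · by_cases hB : ∃ j, j < m' - 1 ∧ j ∉ s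
    · obtain ⟨j, hj, hjs⟩ := hB
      left
      refine ⟨insert j e, mkMove h2 (by omega) hjs, move_card (mkMove h2 (by omega) hjs) h2, ?_, ?_⟩
      · rw [Finset.sup_insert]; simp only [id]; omega
      · exact Finset.mem_insert_of_mem ((hmeme _).mpr ⟨hA, by omega⟩)
    · right
      push_neg at hB
      have hseq : s = insert (s.sup id) (Finset.range (m' + 1)) := by
        ext x
        simp only [Finset.mem_insert, Finset.mem_range]
        constructor
        · intro hx
          by_cases hxm : x = s.sup id
          · exact Or.inl hxm
          · right; have := hle_m' x hx hxm; omega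
        · rintro (rfl | hx)
          · exact M_mem hne
          · rcases Nat.lt_or_ge x (m' - 1) with h | h
            · exact hB x h
            · have hx2 : x = m' - 1 ∨ x = m' := by omega
              rcases hx2 with rfl | rfl
              · exact hA
              · exact hm's
      refine ⟨hseq, ?_⟩
      rw [hseq, Finset.card_insert_of_notMem (by simp only [Finset.mem_range]; omega),
        Finset.card_range]
  · -- m' - 1 ∉ s, so m' ≥ 1 (else m' = 0 and m' - 1 = 0 = m' ∈ s)
    have hm'1 : 1 ≤ m' := by
      by_contra h
      have h0 : m' - 1 = m' := by omega
      exact hA (by rw [h0]; exact hm's)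
    left
    refine ⟨insert (m' - 1) e, mkMove h2 (by omega) hA,
      move_card (mkMove h2 (by omega) hA) h2, ?_, ?_⟩
    · rw [Finset.sup_insert]; simp only [id]; omega
    · exact Finset.mem_insert_self _ _

lemma main : ∀ (n : ℕ) (s : Finset ℕ), 2 ≤ s.card → s.sum id ≤ n →
    ((mgrundy s = 0 ↔ PA s) ∧ (mgrundy s = 1 ↔ PB s)) := by
  intro n
  induction n with
  | zero =>
    intro s h2 hsum
    exfalso
    have hne : s.Nonempty := Finset.card_pos.mp (by omega)
    have h1 := one_le_M h2
    have h3 : s.sup id ≤ s.sum id :=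
      Finset.single_le_sum (f := id) (fun i _ => Nat.zero_le _) (M_mem hne)
    omega
  | succ n IH =>
    intro s h2 hsum
    have hne : s.Nonempty := Finset.card_pos.mp (by omega)
    have h1M := one_le_M h2
    have IHm : ∀ t, MWMove s t → ((mgrundy t = 0 ↔ PA t) ∧ (mgrundy t = 1 ↔ PB t)) := by
      intro t ht
      refine IH t (by rw [move_card ht h2]; exact h2) (by have := ht.sum_lt; omega)
    by_cases hm1 : s.sup id - 1 ∈ s
    · -- top two consecutive
      have hmove1 : ∀ t, MWMove s t → t.sup id = s.sup id - 1 ∧ t.card = s.card := by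
        intro t ht
        obtain ⟨j, hj, hjs, hteq, hcard, hsup⟩ := move_spec ht h2
        have hesup := erase_sup_of_mem h2 hm1
        have hjne : j ≠ s.sup id - 1 := fun h => hjs (h ▸ hm1)
        refine ⟨?_, hcard⟩
        rw [hsup, hesup]
        omega
      by_cases hpar : Even (s.sup id + s.card)
      · -- PA-odd branch: mgrundy = 0
        have hpa : PA s := Or.inl ⟨hm1, hpar⟩
        have hpb : ¬ PB s := by
          rintro ⟨-, hodd⟩
          obtain ⟨c, hc⟩ := hpar; obtain ⟨c', hc'⟩ := hodd; omega
        have hnt : ¬ (∀ t, ¬ MWMove s t) := by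
          intro h
          obtain ⟨hrange, hsup⟩ := terminal_eq h2 ((no_move_iff h2).mp h)
          obtain ⟨c, hc⟩ := hpar
          omega
        have hg : mgrundy s = 0 := by
          rw [mgrundy, if_neg hnt]
          refine Nat.sInf_eq_zero.mpr (Or.inl ?_)
          intro t ht h0
          have hPAt := (IHm t ht).1.mp h0
          obtain ⟨hsup_t, hcard_t⟩ := hmove1 t ht
          rcases hPAt with ⟨-, hev⟩ | hsp
          · rw [hsup_t, hcard_t] at hev
            obtain ⟨c, hc⟩ := hev; obtain ⟨c', hc'⟩ := hpar; omega
          · have h2t : 2 ≤ t.card := by rw [hcard_t]; exact h2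
            have hst := special_sup h2t hsp
            rw [hsup_t, hcard_t] at hst
            obtain ⟨c, hc⟩ := hpar; omega
        refine ⟨⟨fun _ => hpa, fun _ => hg⟩, ⟨fun h => by omega, fun h => absurd h hpb⟩⟩
      · -- PB branch: mgrundy = 1
        have hOdd : Odd (s.sup id + s.card) := Nat.not_even_iff_odd.mp hpar
        have hpb : PB s := ⟨hm1, hOdd⟩
        have hpa : ¬ PA s := by
          rintro (⟨-, hev⟩ | hsp)
          · exact hpar hev
          · exact special_sup_sub_one_notMem h2 hsp hm1
        have hg : mgrundy s = 1 := by
          by_cases hterm : ∀ t, ¬ MWMove s t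
          · rw [mgrundy, if_pos hterm]
          · rw [mgrundy, if_neg hterm]
            have h1S : (1 : ℕ) ∈ {n : ℕ | ∀ t, ∀ _h : MWMove s t, mgrundy t ≠ n} := by
              intro t ht h1
              have hPBt := (IHm t ht).2.mp h1
              obtain ⟨hsup_t, hcard_t⟩ := hmove1 t ht
              obtain ⟨-, hodd⟩ := hPBt
              rw [hsup_t, hcard_t] at hodd
              obtain ⟨c, hc⟩ := hodd; obtain ⟨c', hc'⟩ := hOdd; omega
            push_neg at hterm
            obtain ⟨t0, ht0⟩ := hterm
            obtain ⟨j0, hj0, hj0s, ht0eq, hc0, hs0⟩ := move_spec ht0 h2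
            have hj0ne : j0 ≠ s.sup id - 1 := fun h => hj0s (h ▸ hm1)
            have hm2 : 2 ≤ s.sup id := by omega
            have hPA0 : ∃ t, MWMove s t ∧ PA t := by
              by_cases hm2s : s.sup id - 2 ∈ s
              · refine ⟨t0, ht0, Or.inl ⟨?_, ?_⟩⟩
                · obtain ⟨hsup_t, -⟩ := hmove1 t0 ht0
                  rw [hsup_t]
                  have heq : s.sup id - 1 - 1 = s.sup id - 2 := by omega
                  rw [heq, ht0eq]
                  exact Finset.mem_insert_of_mem (Finset.mem_erase.mpr ⟨by omega, hm2s⟩)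
                · obtain ⟨hsup_t, hcard_t⟩ := hmove1 t0 ht0
                  rw [hsup_t, hcard_t]
                  obtain ⟨c, hc⟩ := hOdd
                  exact ⟨c, by omega⟩
              · have hmv := mkMove h2 (show s.sup id - 2 < s.sup id by omega) hm2s
                refine ⟨_, hmv, Or.inl ⟨?_, ?_⟩⟩
                · obtain ⟨hsup_t, -⟩ := hmove1 _ hmv
                  rw [hsup_t]
                  have heq : s.sup id - 1 - 1 = s.sup id - 2 := by omega
                  rw [heq]
                  exact Finset.mem_insert_self _ _
                · obtain ⟨hsup_t, hcard_t⟩ := hmove1 _ hmv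
                  rw [hsup_t, hcard_t]
                  obtain ⟨c, hc⟩ := hOdd
                  exact ⟨c, by omega⟩
            obtain ⟨tA, hmvA, hPAA⟩ := hPA0
            have h0S : (0 : ℕ) ∉ {n : ℕ | ∀ t, ∀ _h : MWMove s t, mgrundy t ≠ n} := by
              intro h0
              exact h0 tA hmvA ((IHm tA hmvA).1.mpr hPAA)
            have hSne : Set.Nonempty {n : ℕ | ∀ t, ∀ _h : MWMove s t, mgrundy t ≠ n} := ⟨1, h1S⟩
            have hmem := Nat.sInf_mem hSne
            have hle := Nat.sInf_le h1S
            rcases Nat.lt_or_ge (sInf {n : ℕ | ∀ t, ∀ _h : MWMove s t, mgrundy t ≠ n}) 1 with h | h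
            · exfalso
              have h0 : sInf {n : ℕ | ∀ t, ∀ _h : MWMove s t, mgrundy t ≠ n} = 0 := by omega
              rw [h0] at hmem
              exact h0S hmem
            · omega
        refine ⟨⟨fun h => by omega, fun h => absurd h hpa⟩, ⟨fun _ => hpb, fun _ => hg⟩⟩
    · -- gap at top
      by_cases hsp : s = insert s.card (Finset.range (s.card - 1))
      · -- special position: mgrundy = 0
        have hM : s.sup id = s.card := special_sup h2 hsp
        have hmemS : ∀ x, x ∈ s ↔ x = s.card ∨ x < s.card - 1 := by
          intro x
          conv_lhs => rw [hsp]
          simp [Finset.mem_insert, Finset.mem_range]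
        have he : s.erase (s.sup id) = Finset.range (s.card - 1) := by
          rw [hM]
          nth_rewrite 1 [hsp]
          refine Finset.erase_insert ?_
          simp only [Finset.mem_range]
          omega
        have hnt : ¬ (∀ t, ¬ MWMove s t) := by
          intro h
          refine h _ (mkMove h2 (show s.card - 1 < s.sup id by omega) ?_)
          rw [hmemS]; omega
        have hg : mgrundy s = 0 := by
          rw [mgrundy, if_neg hnt]
          refine Nat.sInf_eq_zero.mpr (Or.inl ?_)
          intro t ht h0
          have hPAt := (IHm t ht).1.mp h0
          obtain ⟨j, hj, hjs, hteq, hcard, hsup⟩ := move_spec ht h2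
          have hjval : j = s.card - 1 := by
            rw [hmemS] at hjs
            rw [hM] at hj
            omega
          have hteq2 : t = Finset.range s.card := by
            obtain ⟨c, hc⟩ : ∃ c, s.card = c + 1 := ⟨s.card - 1, by omega⟩
            rw [hteq, he, hjval, hc]
            norm_num [Finset.range_add_one]
          have htsup : t.sup id = s.card - 1 := by rw [hteq2, sup_range]
          have htcard : t.card = s.card := by rw [hteq2, Finset.card_range]
          rcases hPAt with ⟨-, hev⟩ | hspt
          · rw [htsup, htcard] at hev
            obtain ⟨c, hc⟩ := hev; omega
          · have h5 : t.card ∈ insert t.card (Finset.range (t.card - 1)) :=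
              Finset.mem_insert_self _ _
            rw [← hspt] at h5
            rw [hteq2] at h5
            simp only [Finset.card_range, Finset.mem_range] at h5
            omega
        have hpa : PA s := Or.inr hsp
        have hpb : ¬ PB s := fun h => hm1 h.1
        refine ⟨⟨fun _ => hpa, fun _ => hg⟩, ⟨fun h => by omega, fun h => absurd h hpb⟩⟩
      · -- generic gap position: mgrundy ≥ 2
        have hene : (s.erase (s.sup id)).Nonempty := erase_ne s h2
        set m' := (s.erase (s.sup id)).sup id with hm'def
        have hm'e : m' ∈ s.erase (s.sup id) := M_mem hene
        have hm's : m' ∈ s := Finset.mem_of_mem_erase hm'e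
        have hm'ne : m' ≠ s.sup id := Finset.ne_of_mem_erase hm'e
        have hm'le : m' ≤ s.sup id := le_M hm's
        have hm'2 : m' + 2 ≤ s.sup id := by
          rcases Nat.lt_or_ge (m' + 2) (s.sup id + 1) with h | h
          · omega
          · exfalso
            have hh : m' = s.sup id - 1 := by omega
            exact hm1 (hh ▸ hm's)
        have hm'1s : m' + 1 ∉ s := by
          intro hc
          have : m' + 1 ≤ m' := le_M (Finset.mem_erase.mpr ⟨by omega, hc⟩)
          omega
        have hmvup : MWMove s (insert (m' + 1) (s.erase (s.sup id))) :=
          mkMove h2 (by omega) hm'1s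
        have hsupup : (insert (m' + 1) (s.erase (s.sup id))).sup id = m' + 1 := by
          rw [Finset.sup_insert]
          simp only [id]
          omega
        have hcardup : (insert (m' + 1) (s.erase (s.sup id))).card = s.card :=
          move_card hmvup h2
        have hpairup : (insert (m' + 1) (s.erase (s.sup id))).sup id - 1
            ∈ insert (m' + 1) (s.erase (s.sup id)) := by
          rw [hsupup]
          have h5 : m' + 1 - 1 = m' := by omega
          rw [h5]
          exact Finset.mem_insert_of_mem hm'e
        have hmoves : (∃ t, MWMove s t ∧ PA t) ∧ (∃ t, MWMove s t ∧ PB t) := by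
          by_cases hpar : Even (m' + s.card)
          · constructor
            · -- PA via down_or_packed
              rcases down_or_packed h2 hm1 with ⟨t, hmv, hcard, hsup, hmem⟩ | ⟨hpack, hkval⟩
              · rw [← hm'def] at hsup hmem
                exact ⟨t, hmv, Or.inl ⟨by rw [hsup]; exact hmem,
                  by rw [hsup, hcard]; exact hpar⟩⟩
              · -- packed: move to the special position
                rw [← hm'def] at hpack hkval
                have hMne : s.sup id ≠ m' + 2 := by
                  intro hMeq
                  apply hsp
                  rw [hkval]
                  rw [show m' + 2 - 1 = m' + 1 by omega]
                  rw [← hMeq]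
                  exact hpack
                have hj2 : m' + 2 ∉ s := by
                  intro hc
                  rw [hpack] at hc
                  rcases Finset.mem_insert.mp hc with h | h
                  · exact hMne h.symm
                  · have := Finset.mem_range.mp h; omega
                have hmv2 := mkMove h2 (show m' + 2 < s.sup id by omega) hj2
                have he2 : s.erase (s.sup id) = Finset.range (m' + 1) := by
                  nth_rewrite 1 [hpack]
                  refine Finset.erase_insert ?_
                  simp only [Finset.mem_range]
                  omega
                refine ⟨_, hmv2, Or.inr ?_⟩
                have hcard2 : (insert (m' + 2) (s.erase (s.sup id))).card = s.card :=
                  move_card hmv2 h2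
                rw [hcard2, hkval, he2, show m' + 2 - 1 = m' + 1 by omega]
            · exact ⟨_, hmvup, ⟨hpairup, by
                rw [hsupup, hcardup]
                obtain ⟨c, hc⟩ := hpar
                exact ⟨c, by omega⟩⟩⟩
          · have hOdd : Odd (m' + s.card) := Nat.not_even_iff_odd.mp hpar
            constructor
            · exact ⟨_, hmvup, Or.inl ⟨hpairup, by
                rw [hsupup, hcardup]
                obtain ⟨c, hc⟩ := hOdd
                exact ⟨c + 1, by omega⟩⟩⟩
            · rcases down_or_packed h2 hm1 with ⟨t, hmv, hcard, hsup, hmem⟩ | ⟨hpack, hkval⟩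
              · rw [← hm'def] at hsup hmem
                exact ⟨t, hmv, ⟨by rw [hsup]; exact hmem,
                  by rw [hsup, hcard]; exact hOdd⟩⟩
              · rw [← hm'def] at hkval
                exfalso
                obtain ⟨c, hc⟩ := hOdd
                omega
        obtain ⟨⟨tA, hmvA, hPAA⟩, ⟨tB, hmvB, hPBB⟩⟩ := hmoves
        have hnt : ¬ (∀ t, ¬ MWMove s t) := fun h => h tA hmvA
        have hgA : mgrundy tA = 0 := (IHm tA hmvA).1.mpr hPAA
        have hgB : mgrundy tB = 1 := (IHm tB hmvB).2.mpr hPBB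
        have hSne : Set.Nonempty {n : ℕ | ∀ t, ∀ _h : MWMove s t, mgrundy t ≠ n} := by
          refine ⟨((Finset.range (s.sup id)).sup
            fun j => mgrundy (insert j (s.erase (s.sup id)))) + 1, ?_⟩
          intro t ht hceq
          obtain ⟨j, hj, hjs, hteq, -, -⟩ := move_spec ht h2
          have hle : mgrundy (insert j (s.erase (s.sup id))) ≤
              (Finset.range (s.sup id)).sup fun j => mgrundy (insert j (s.erase (s.sup id))) :=
            Finset.le_sup (f := fun j => mgrundy (insert j (s.erase (s.sup id))))
              (Finset.mem_range.mpr hj)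
          rw [hteq] at hceq
          omega
        have hg : mgrundy s ≠ 0 ∧ mgrundy s ≠ 1 := by
          rw [mgrundy, if_neg hnt]
          have hmem := Nat.sInf_mem hSne
          constructor
          · intro h0
            exact hmem tA hmvA (by rw [hgA, ← h0])
          · intro h1
            exact hmem tB hmvB (by rw [hgB, ← h1])
        have hpa : ¬ PA s := by
          rintro (⟨h, -⟩ | h)
          · exact hm1 h
          · exact hsp h
        have hpb : ¬ PB s := fun h => hm1 h.1
        exact ⟨⟨fun h => absurd h hg.1, fun h => absurd h hpa⟩,
          ⟨fun h => absurd h hg.2, fun h => absurd h hpb⟩⟩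

/-- positions of misère Grundy value 1. -/
theorem maxWelter_misere_grundy_one_iff (k : ℕ) (hk : 2 ≤ k) (a : Fin k → ℕ)
    (ha : StrictMono a) :
    mgrundy (Finset.image a Finset.univ) = 1 ↔
      a ⟨k - 1, by omega⟩ = a ⟨k - 2, by omega⟩ + 1 ∧
      Even (a ⟨k - 2, by omega⟩ + k) := by
  set s := Finset.image a Finset.univ with hs
  have hcard : s.card = k := by
    rw [hs, Finset.card_image_of_injective _ ha.injective, Finset.card_univ, Fintype.card_fin]
  have h2 : 2 ≤ s.card := by omega
  have hmemIff : ∀ x, x ∈ s ↔ ∃ i, a i = x := by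
    intro x
    simp [hs]
  have hsup : s.sup id = a ⟨k - 1, by omega⟩ := by
    refine le_antisymm (Finset.sup_le ?_) (le_M ((hmemIff _).mpr ⟨_, rfl⟩))
    intro x hx
    obtain ⟨i, rfl⟩ := (hmemIff x).mp hx
    exact ha.monotone (by rw [Fin.le_def]; have := i.isLt; simp; omega)
  have hlt : a ⟨k - 2, by omega⟩ < a ⟨k - 1, by omega⟩ :=
    ha (by rw [Fin.lt_def]; simp; omega)
  have h1a : 1 ≤ a ⟨k - 1, by omega⟩ := by omega
  rw [(main (s.sum id) s h2 le_rfl).2]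
  unfold PB
  rw [hsup]
  constructor
  · rintro ⟨hmem, hodd⟩
    obtain ⟨i, hi⟩ := (hmemIff _).mp hmem
    have hik : a ⟨k - 2, by omega⟩ = a ⟨k - 1, by omega⟩ - 1 := by
      have hi_lt : a i < a ⟨k - 1, by omega⟩ := by omega
      have hi_le : (i : ℕ) ≤ k - 2 := by
        by_contra hcon
        push_neg at hcon
        have hge : a ⟨k - 1, by omega⟩ ≤ a i :=
          ha.monotone (by rw [Fin.le_def]; have := i.isLt; simp; omega)
        omega
      have h3 : a i ≤ a ⟨k - 2, by omega⟩ :=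
        ha.monotone (by rw [Fin.le_def]; simpa using hi_le)
      omega
    refine ⟨by omega, ?_⟩
    obtain ⟨c, hc⟩ := hodd
    exact ⟨c, by omega⟩
  · rintro ⟨h1, hev⟩
    refine ⟨(hmemIff _).mpr ⟨⟨k - 2, by omega⟩, by omega⟩, ?_⟩
    obtain ⟨c, hc⟩ := hev
    exact ⟨c, by omega⟩
end

section
/- Let G be a finite acyclic impartial game such that its normal Sprague-Grundy function G and misère Sprague-Grundy function G⁻ swap values 0 and 1 (i.e., G(p) = 0 iff G⁻(p) = 1, and G(p) = 1 iff G⁻(p) = 0). Then for every position p with G⁻(p) ≥ 2, one has G⁻(p) = G(p); hence the game is strongly miserable. -/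
open Classical in
/-- if the normal and misère Grundy functions of a finite acyclic
impartial game swap the values 0 and 1, then they agree on all values ≥ 2
(hence the game is strongly miserable). -/
theorem swap_zero_one_strongly_miserable {α : Type*} (move : α → α → Prop)
    (hwf : WellFounded (fun x y => move y x))
    (hfin : ∀ p, {q | move p q}.Finite)
    (g g' : α → ℕ)
    (hg : ∀ p, g p = sInf {n : ℕ | ∀ q, move p q → g q ≠ n})
    (hg' : ∀ p, g' p = if ∀ q, ¬ move p q then 1
      else sInf {n : ℕ | ∀ q, move p q → g' q ≠ n})
    (h01 : ∀ p, (g p = 0 ↔ g' p = 1) ∧ (g p = 1 ↔ g' p = 0)) :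
    ∀ p, 2 ≤ g' p → g' p = g p := by
  intro p
  induction p using hwf.induction with
  | _ p ih =>
  intro hp
  have hmove : ¬ ∀ q, ¬ move p q := by
    intro h
    rw [hg' p, if_pos h] at hp; omega
  rw [hg' p, if_neg hmove] at hp ⊢
  rw [hg p]
  set A := {n : ℕ | ∀ q, move p q → g q ≠ n} with hAdef
  set A' := {n : ℕ | ∀ q, move p q → g' q ≠ n} with hA'def
  have key : ∀ q, move p q →
      (g q = 0 ∧ g' q = 1) ∨ (g q = 1 ∧ g' q = 0) ∨ (g q = g' q ∧ 2 ≤ g' q) := by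
    intro q hq
    by_cases h0 : g' q = 0
    · exact Or.inr (Or.inl ⟨(h01 q).2.mpr h0, h0⟩)
    by_cases h1 : g' q = 1
    · exact Or.inl ⟨(h01 q).1.mpr h1, h1⟩
    · have h2 : 2 ≤ g' q := by omega
      exact Or.inr (Or.inr ⟨(ih q hq h2).symm, h2⟩)
  -- nonemptiness of A and A'
  have hAne : A.Nonempty := by
    obtain ⟨B, hB⟩ := ((hfin p).image g).bddAbove
    refine ⟨B + 1, fun q hq hc => ?_⟩
    have : g q ≤ B := hB ⟨q, hq, rfl⟩
    omega
  have hA'ne : A'.Nonempty := by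
    obtain ⟨B, hB⟩ := ((hfin p).image g').bddAbove
    refine ⟨B + 1, fun q hq hc => ?_⟩
    have : g' q ≤ B := hB ⟨q, hq, rfl⟩
    omega
  have hmem2 : ∀ n, 2 ≤ n → (n ∈ A ↔ n ∈ A') := by
    intro n hn
    constructor
    · intro h q hq hc
      rcases key q hq with ⟨h1, h2⟩ | ⟨h1, h2⟩ | ⟨h1, h2⟩
      · omega
      · omega
      · exact h q hq (by omega)
    · intro h q hq hc
      rcases key q hq with ⟨h1, h2⟩ | ⟨h1, h2⟩ | ⟨h1, h2⟩
      · omega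
      · omega
      · exact h q hq (by omega)
  -- 0,1 ∉ A'
  have h0A' : (0 : ℕ) ∉ A' := Nat.notMem_of_lt_sInf (by omega)
  have h1A' : (1 : ℕ) ∉ A' := Nat.notMem_of_lt_sInf (by omega)
  obtain ⟨q0, hq0, hgq0⟩ : ∃ q, move p q ∧ g' q = 0 := by
    by_contra h; exact h0A' (fun q hq hc => h ⟨q, hq, hc⟩)
  obtain ⟨q1, hq1, hgq1⟩ : ∃ q, move p q ∧ g' q = 1 := by
    by_contra h; exact h1A' (fun q hq hc => h ⟨q, hq, hc⟩)
  have h0A : (0 : ℕ) ∉ A := fun h => h q1 hq1 ((h01 q1).1.mpr hgq1)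
  have h1A : (1 : ℕ) ∉ A := fun h => h q0 hq0 ((h01 q0).2.mpr hgq0)
  have hAinf : sInf A ∈ A := Nat.sInf_mem hAne
  have hA'inf : sInf A' ∈ A' := Nat.sInf_mem hA'ne
  have hA2 : 2 ≤ sInf A := by
    by_contra h
    interval_cases hv : sInf A
    · exact h0A (hv ▸ hAinf)
    · exact h1A (hv ▸ hAinf)
  have le1 : sInf A ≤ sInf A' := Nat.sInf_le ((hmem2 _ hp).mpr hA'inf)
  have le2 : sInf A' ≤ sInf A := Nat.sInf_le ((hmem2 _ hA2).mp hAinf)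
  omega
end

section
/- The game Max-Welter is strongly miserable: for every position p with k ≥ 2 coins, if the normal Sprague-Grundy value G(p) is 0 or 1 then G(p) + G⁻(p) = 1, and otherwise G⁻(p) = G(p), where G⁻ is the misère Sprague-Grundy value. -/
section Helpers
open Finset

lemma max'_eq_of {t : Finset ℕ} (ht : t.Nonempty) {c : ℕ} (hc : c ∈ t)
    (h : ∀ x ∈ t, x ≤ c) : t.max' ht = c :=
  le_antisymm (Finset.max'_le _ _ _ h) (Finset.le_max' _ _ hc)

lemma MWMove.card_eq {s t : Finset ℕ} (h : MWMove s t) : t.card = s.card := by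
  obtain ⟨hs, j, hj, hjs, rfl⟩ := h
  rw [Finset.card_insert_of_notMem (fun hc => hjs (Finset.mem_of_mem_erase hc)),
      Finset.card_erase_of_mem (s.max'_mem hs)]
  have : 0 < s.card := Finset.card_pos.mpr hs
  omega

theorem grundy_le_sum (s : Finset ℕ) : grundy s ≤ s.sum id := by
  rw [grundy]
  refine Nat.sInf_le ?_
  intro t h
  have h1 : grundy t ≤ t.sum id := grundy_le_sum t
  have h2 := h.sum_lt
  omega
termination_by s.sum id
decreasing_by exact h.sum_lt

theorem mgrundy_le_sum (s : Finset ℕ) : mgrundy s ≤ s.sum id + 1 := by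
  rw [mgrundy]
  split
  · omega
  · refine Nat.sInf_le ?_
    intro t h
    have h1 : mgrundy t ≤ t.sum id + 1 := mgrundy_le_sum t
    have h2 := h.sum_lt
    omega
termination_by s.sum id
decreasing_by exact h.sum_lt

lemma grundy_eq_sInf (s : Finset ℕ) :
    grundy s = sInf {n : ℕ | ∀ t, ∀ _h : MWMove s t, grundy t ≠ n} := by
  rw [grundy]

lemma grundy_set_nonempty (s : Finset ℕ) :
    Set.Nonempty {n : ℕ | ∀ t, ∀ _h : MWMove s t, grundy t ≠ n} :=
  ⟨s.sum id, fun t h => Nat.ne_of_lt (lt_of_le_of_lt (grundy_le_sum t) h.sum_lt)⟩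

lemma grundy_spec {s t : Finset ℕ} (h : MWMove s t) : grundy t ≠ grundy s := by
  have := Nat.sInf_mem (grundy_set_nonempty s)
  rw [← grundy_eq_sInf] at this
  exact this t h

lemma grundy_eq_of (s : Finset ℕ) (m : ℕ)
    (h1 : ∀ t, MWMove s t → grundy t ≠ m)
    (h2 : ∀ v, v < m → ∃ t, MWMove s t ∧ grundy t = v) : grundy s = m := by
  rw [grundy_eq_sInf]
  refine le_antisymm (Nat.sInf_le h1) ?_
  by_contra hlt
  push_neg at hlt
  have hmem := Nat.sInf_mem (grundy_set_nonempty s)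
  obtain ⟨t, hmv, hg⟩ := h2 _ hlt
  exact hmem t hmv hg

lemma grundy_lt_exists {s : Finset ℕ} {m : ℕ} (h : m < grundy s) :
    ∃ t, MWMove s t ∧ grundy t = m := by
  by_contra hc
  push_neg at hc
  have : m ∈ {n : ℕ | ∀ t, ∀ _h : MWMove s t, grundy t ≠ n} :=
    fun t hmv => hc t hmv
  have := Nat.sInf_le this
  rw [← grundy_eq_sInf] at this
  omega

end Helpers
section Helpers2
open Finset

lemma mgrundy_terminal {s : Finset ℕ} (h : ∀ t, ¬ MWMove s t) : mgrundy s = 1 := by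
  rw [mgrundy, if_pos h]

lemma grundy_terminal {s : Finset ℕ} (h : ∀ t, ¬ MWMove s t) : grundy s = 0 :=
  grundy_eq_of s 0 (fun t hmv => absurd hmv (h t)) (fun v hv => by omega)

lemma mgrundy_eq_sInf {s : Finset ℕ} (h : ¬ ∀ t, ¬ MWMove s t) :
    mgrundy s = sInf {n : ℕ | ∀ t, ∀ _h : MWMove s t, mgrundy t ≠ n} := by
  rw [mgrundy, if_neg h]

lemma mgrundy_set_nonempty (s : Finset ℕ) :
    Set.Nonempty {n : ℕ | ∀ t, ∀ _h : MWMove s t, mgrundy t ≠ n} :=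
  ⟨s.sum id + 1, fun t h => by
    have := mgrundy_le_sum t
    have := h.sum_lt
    omega⟩

lemma mgrundy_spec {s t : Finset ℕ} (hnt : ¬ ∀ t, ¬ MWMove s t) (h : MWMove s t) :
    mgrundy t ≠ mgrundy s := by
  have := Nat.sInf_mem (mgrundy_set_nonempty s)
  rw [← mgrundy_eq_sInf hnt] at this
  exact this t h

lemma mgrundy_eq_of {s : Finset ℕ} (hnt : ¬ ∀ t, ¬ MWMove s t) (m : ℕ)
    (h1 : ∀ t, MWMove s t → mgrundy t ≠ m)
    (h2 : ∀ v, v < m → ∃ t, MWMove s t ∧ mgrundy t = v) : mgrundy s = m := by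
  rw [mgrundy_eq_sInf hnt]
  refine le_antisymm (Nat.sInf_le h1) ?_
  by_contra hlt
  push_neg at hlt
  have hmem := Nat.sInf_mem (mgrundy_set_nonempty s)
  obtain ⟨t, hmv, hg⟩ := h2 _ hlt
  exact hmem t hmv hg

/-- Basic facts about a move target `insert j (s.erase b)`. -/
lemma move_mk {s : Finset ℕ} (hs : s.Nonempty) {j : ℕ} (hj : j < s.max' hs)
    (hjs : j ∉ s) : MWMove s (insert j (s.erase (s.max' hs))) :=
  ⟨hs, j, hj, hjs, rfl⟩

lemma mem_target (s : Finset ℕ) (y j x : ℕ) :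
    x ∈ insert j (s.erase y) ↔ x = j ∨ (x ∈ s ∧ x ≠ y) := by
  simp [Finset.mem_insert, Finset.mem_erase, and_comm]

lemma card_le_max'_of_missing {s : Finset ℕ} (hs : s.Nonempty) {j : ℕ}
    (hj : j < s.max' hs) (hjs : j ∉ s) : s.card ≤ s.max' hs := by
  have h1 : insert j s ⊆ Finset.range (s.max' hs + 1) := by
    intro x hx
    rcases Finset.mem_insert.mp hx with rfl | hx
    · exact Finset.mem_range.mpr (by omega)
    · exact Finset.mem_range.mpr (Nat.lt_succ_of_le (Finset.le_max' s x hx))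
  have := Finset.card_le_card h1
  rw [Finset.card_insert_of_notMem hjs, Finset.card_range] at this
  omega

lemma card_le_max'_succ {s : Finset ℕ} (hs : s.Nonempty) : s.card ≤ s.max' hs + 1 := by
  have h1 : s ⊆ Finset.range (s.max' hs + 1) := fun x hx =>
    Finset.mem_range.mpr (Nat.lt_succ_of_le (Finset.le_max' s x hx))
  simpa using Finset.card_le_card h1

lemma max'_pos {s : Finset ℕ} (hs : s.Nonempty) (hcard : 2 ≤ s.card) :
    1 ≤ s.max' hs := by
  have := card_le_max'_succ hs
  omega

end Helpers2
theorem MWmain : ∀ (n : ℕ) (s : Finset ℕ), s.sum id < n → ∀ (hs : s.Nonempty),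
    2 ≤ s.card →
    ((s.max' hs - 1 ∈ s → grundy s = (s.max' hs + 1 - s.card) % 2) ∧
     (s.max' hs - 1 ∉ s → s.max' hs = s.card → grundy s = 1) ∧
     (s.max' hs - 1 ∉ s → s.max' hs ≠ s.card → grundy s ≠ 0 ∧ grundy s ≠ 1)) := by
  intro n
  induction n with
  | zero => intro s h; exact absurd h (Nat.not_lt_zero _)
  | succ n IH =>
    intro s hsum hs hcard
    set b := s.max' hs with hbdef
    have hbmem : b ∈ s := s.max'_mem hs
    have hble : ∀ x ∈ s, x ≤ b := fun x hx => Finset.le_max' s x hx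
    have hb1 : 1 ≤ b := max'_pos hs hcard
    have move_dest : ∀ t, MWMove s t → ∃ j, j < b ∧ j ∉ s ∧ t = insert j (s.erase b) := by
      intro t hmv
      obtain ⟨hs', j, hj, hjs, rfl⟩ := hmv
      exact ⟨j, hj, hjs, rfl⟩
    -- Part A : top two squares consecutive
    have partA : b - 1 ∈ s → grundy s = (b + 1 - s.card) % 2 := by
      intro hbm1
      have claim1 : ∀ t, MWMove s t → grundy t ≠ (b + 1 - s.card) % 2 := by
        intro t hmv
        obtain ⟨j, hj, hjs, rfl⟩ := move_dest t hmv
        have hbk : s.card ≤ b := card_le_max'_of_missing hs hj hjs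
        have htne : (insert j (s.erase b)).Nonempty := ⟨j, Finset.mem_insert_self _ _⟩
        have hmem1 : b - 1 ∈ insert j (s.erase b) := by
          rw [mem_target]; right; exact ⟨hbm1, by omega⟩
        have hub : ∀ x ∈ insert j (s.erase b), x ≤ b - 1 := by
          intro x hx
          rw [mem_target] at hx
          rcases hx with rfl | ⟨hxs, hxb⟩
          · omega
          · have := hble x hxs; omega
        have hmax : (insert j (s.erase b)).max' htne = b - 1 := max'_eq_of htne hmem1 hub
        have hcards : (insert j (s.erase b)).card = s.card := hmv.card_eq
        have hsums : (insert j (s.erase b)).sum id < n := by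
          have := hmv.sum_lt; omega
        have IHt := IH (insert j (s.erase b)) hsums htne (by omega)
        rw [hmax, hcards] at IHt
        by_cases hbb : b - 1 - 1 ∈ insert j (s.erase b)
        · have := IHt.1 hbb
          rw [this]
          omega
        · by_cases hbc : b - 1 = s.card
          · have := IHt.2.1 hbb hbc
            rw [this]
            omega
          · have := IHt.2.2 hbb hbc
            have h2 : (b + 1 - s.card) % 2 = 0 ∨ (b + 1 - s.card) % 2 = 1 := by omega
            rcases h2 with h2 | h2 <;> rw [h2]
            · exact this.1
            · exact this.2
      have claim2 : ∀ v, v < (b + 1 - s.card) % 2 → ∃ t, MWMove s t ∧ grundy t = v := by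
        intro v hv
        have hp1 : (b + 1 - s.card) % 2 = 1 := by omega
        have hv0 : v = 0 := by omega
        subst hv0
        have hbk : s.card ≤ b := by omega
        have comp : ∀ j, j < b → j ∉ s → (b - 2 = j ∨ b - 2 ∈ s) →
            grundy (insert j (s.erase b)) = 0 := by
          intro j hj hjs hcase
          have hmv : MWMove s (insert j (s.erase b)) := move_mk hs hj hjs
          have htne : (insert j (s.erase b)).Nonempty := ⟨j, Finset.mem_insert_self _ _⟩
          have hmem1 : b - 1 ∈ insert j (s.erase b) := by
            rw [mem_target]; right; exact ⟨hbm1, by omega⟩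
          have hub : ∀ x ∈ insert j (s.erase b), x ≤ b - 1 := by
            intro x hx
            rw [mem_target] at hx
            rcases hx with rfl | ⟨hxs, hxb⟩
            · omega
            · have := hble x hxs; omega
          have hmax : (insert j (s.erase b)).max' htne = b - 1 := max'_eq_of htne hmem1 hub
          have hsums : (insert j (s.erase b)).sum id < n := by
            have := hmv.sum_lt; omega
          have IHt := IH (insert j (s.erase b)) hsums htne (by rw [hmv.card_eq]; omega)
          rw [hmax, hmv.card_eq] at IHt
          have hb2m : b - 1 - 1 ∈ insert j (s.erase b) := by
            rw [mem_target]
            rcases hcase with h | h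
            · left; omega
            · right; exact ⟨h, by omega⟩
          rw [IHt.1 hb2m]
          omega
        have hex : ∃ j, j < b ∧ j ∉ s := by
          by_contra hc
          push_neg at hc
          have hsub : Finset.range (b + 1) ⊆ s := by
            intro x hx
            rw [Finset.mem_range] at hx
            rcases Nat.lt_or_ge x b with h | h
            · exact hc x h
            · have hxb : x = b := by omega
              rw [hxb]; exact hbmem
          have := Finset.card_le_card hsub
          rw [Finset.card_range] at this
          omega
        obtain ⟨j0, hj0, hj0s⟩ := hex
        by_cases hb2 : b - 2 ∈ s
        · exact ⟨insert j0 (s.erase b), move_mk hs hj0 hj0s, comp j0 hj0 hj0s (Or.inr hb2)⟩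
        · exact ⟨insert (b - 2) (s.erase b), move_mk hs (by omega) hb2,
            comp (b - 2) (by omega) hb2 (Or.inl rfl)⟩
      exact grundy_eq_of s _ claim1 claim2
    refine ⟨partA, ?_, ?_⟩
    -- Part B1 : special position {0,…,k-2} ∪ {k}
    · intro hbm1 hbk
      have hseq : s = insert b (Finset.range (b - 1)) := by
        have hsub : s ⊆ insert b (Finset.range (b - 1)) := by
          intro x hx
          have hxb := hble x hx
          rcases eq_or_lt_of_le hxb with rfl | hlt
          · exact Finset.mem_insert_self _ _
          · have hxne : x ≠ b - 1 := fun h => hbm1 (h ▸ hx)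
            exact Finset.mem_insert_of_mem (Finset.mem_range.mpr (by omega))
        have hcard_u : (insert b (Finset.range (b - 1))).card = b := by
          rw [Finset.card_insert_of_notMem (by simp [Finset.mem_range]),
            Finset.card_range]
          omega
        exact Finset.eq_of_subset_of_card_le hsub (by omega)
      have herase : s.erase b = Finset.range (b - 1) := by
        rw [hseq, Finset.erase_insert (by simp [Finset.mem_range])]
      have hrange : insert (b - 1) (Finset.range (b - 1)) = Finset.range b := by
        rw [← Finset.range_add_one]
        congr 1
        omega
      have hmv0 : MWMove s (insert (b - 1) (s.erase b)) := move_mk hs (by omega) hbm1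
      have hgr : grundy (Finset.range b) = 0 := by
        have hne : (Finset.range b).Nonempty := ⟨0, Finset.mem_range.mpr (by omega)⟩
        have hcardr : (Finset.range b).card = b := Finset.card_range b
        have hmaxr : (Finset.range b).max' hne = b - 1 :=
          max'_eq_of hne (Finset.mem_range.mpr (by omega))
            (fun x hx => by rw [Finset.mem_range] at hx; omega)
        have hsums : (Finset.range b).sum id < n := by
          have := hmv0.sum_lt
          rw [herase, hrange] at this
          omega
        have IHt := IH (Finset.range b) hsums hne (by omega)
        rw [hmaxr, hcardr] at IHt
        have hmem2 : b - 1 - 1 ∈ Finset.range b := Finset.mem_range.mpr (by omega)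
        rw [IHt.1 hmem2]
        omega
      have hone : ∀ t, MWMove s t → grundy t = 0 := by
        intro t hmv
        obtain ⟨j, hj, hjs, rfl⟩ := move_dest t hmv
        have hj1 : j = b - 1 := by
          by_contra hne
          exact hjs (by rw [hseq]
                        exact Finset.mem_insert_of_mem (Finset.mem_range.mpr (by omega)))
        rw [hj1, herase, hrange]
        exact hgr
      refine grundy_eq_of s 1 (fun t hmv => by rw [hone t hmv]; omega) ?_
      intro v hv
      have hv0 : v = 0 := by omega
      subst hv0
      exact ⟨insert (b - 1) (s.erase b), hmv0, by rw [herase, hrange]; exact hgr⟩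
    -- Part B2 : gap at the top, not the special position
    · intro hbm1 hbk
      have hkb : s.card ≤ b := card_le_max'_of_missing hs (by omega) hbm1
      have hkb1 : s.card + 1 ≤ b := by omega
      have hene : (s.erase b).Nonempty := by
        rw [← Finset.card_pos, Finset.card_erase_of_mem hbmem]
        omega
      set a := (s.erase b).max' hene with hadef
      have hamem' : a ∈ s.erase b := (s.erase b).max'_mem hene
      have hams : a ∈ s := Finset.mem_of_mem_erase hamem'
      have hanb : a ≠ b := (Finset.mem_erase.mp hamem').1
      have haub : ∀ x ∈ s, x ≠ b → x ≤ a := fun x hx hxb =>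
        Finset.le_max' _ x (Finset.mem_erase.mpr ⟨hxb, hx⟩)
      have halt : a < b := lt_of_le_of_ne (hble a hams) hanb
      have hanb1 : a ≠ b - 1 := fun h => hbm1 (h ▸ hams)
      have hab2 : a + 2 ≤ b := by omega
      have ha1s : a + 1 ∉ s := fun h => by have := haub _ h (by omega); omega
      have hak : s.card - 2 ≤ a := by
        have hsub : s.erase b ⊆ Finset.range (a + 1) := fun x hx =>
          Finset.mem_range.mpr (Nat.lt_succ_of_le (Finset.le_max' _ _ hx))
        have := Finset.card_le_card hsub
        rw [Finset.card_erase_of_mem hbmem, Finset.card_range] at this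
        omega
      -- first option : move b to a+1
      have hmv1 : MWMove s (insert (a + 1) (s.erase b)) := move_mk hs (by omega) ha1s
      have hg1 : grundy (insert (a + 1) (s.erase b)) = (a + 2 - s.card) % 2 := by
        have htne : (insert (a + 1) (s.erase b)).Nonempty :=
          ⟨a + 1, Finset.mem_insert_self _ _⟩
        have hmax : (insert (a + 1) (s.erase b)).max' htne = a + 1 := by
          refine max'_eq_of htne (Finset.mem_insert_self _ _) ?_
          intro x hx
          rcases Finset.mem_insert.mp hx with rfl | hx
          · omega
          · have := Finset.le_max' _ x hx; omega
        have hsums : (insert (a + 1) (s.erase b)).sum id < n := by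
          have := hmv1.sum_lt; omega
        have IHt := IH _ hsums htne (by rw [hmv1.card_eq]; omega)
        rw [hmax, hmv1.card_eq] at IHt
        have hconsec : a + 1 - 1 ∈ insert (a + 1) (s.erase b) := by
          rw [Nat.add_sub_cancel]
          exact Finset.mem_insert_of_mem hamem'
        rw [IHt.1 hconsec]
      by_cases hcase : s.card - 1 ≤ a
      · -- generic case : a ≥ k-1, build a second consecutive option with opposite parity
        have hex : ∃ j0, j0 < a ∧ j0 ∉ s ∧ (a - 1 = j0 ∨ a - 1 ∈ s) := by
          by_cases ham1 : a - 1 ∈ s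
          · have hex0 : ∃ j0, j0 < a ∧ j0 ∉ s := by
              by_contra hc
              push_neg at hc
              have hsub : insert b (Finset.range (a + 1)) ⊆ s := by
                intro x hx
                rcases Finset.mem_insert.mp hx with rfl | hx
                · exact hbmem
                · rw [Finset.mem_range] at hx
                  rcases Nat.lt_or_ge x a with h | h
                  · exact hc x h
                  · have hxa : x = a := by omega
                    rw [hxa]; exact hams
              have := Finset.card_le_card hsub
              rw [Finset.card_insert_of_notMem (by simp [Finset.mem_range]; omega),
                Finset.card_range] at this
              omega
            obtain ⟨j0, h1, h2⟩ := hex0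
            exact ⟨j0, h1, h2, Or.inr ham1⟩
          · exact ⟨a - 1, by omega, ham1, Or.inl rfl⟩
        obtain ⟨j0, hj0a, hj0s, hj0or⟩ := hex
        have hmv2 : MWMove s (insert j0 (s.erase b)) := move_mk hs (by omega) hj0s
        have hg2 : grundy (insert j0 (s.erase b)) = (a + 1 - s.card) % 2 := by
          have htne : (insert j0 (s.erase b)).Nonempty := ⟨j0, Finset.mem_insert_self _ _⟩
          have hmax : (insert j0 (s.erase b)).max' htne = a := by
            refine max'_eq_of htne (Finset.mem_insert_of_mem hamem') ?_
            intro x hx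
            rcases Finset.mem_insert.mp hx with rfl | hx
            · omega
            · exact Finset.le_max' _ x hx
          have hsums : (insert j0 (s.erase b)).sum id < n := by
            have := hmv2.sum_lt; omega
          have IHt := IH _ hsums htne (by rw [hmv2.card_eq]; omega)
          rw [hmax, hmv2.card_eq] at IHt
          have hconsec : a - 1 ∈ insert j0 (s.erase b) := by
            rw [mem_target]
            rcases hj0or with h | h
            · left; exact h
            · right; exact ⟨h, by omega⟩
          rw [IHt.1 hconsec]
        constructor
        · intro h
          by_cases hpar : (a + 2 - s.card) % 2 = 0
          · exact grundy_spec hmv1 (by rw [hg1, hpar, h])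
          · have hpar2 : (a + 1 - s.card) % 2 = 0 := by omega
            exact grundy_spec hmv2 (by rw [hg2, hpar2, h])
        · intro h
          by_cases hpar : (a + 2 - s.card) % 2 = 1
          · exact grundy_spec hmv1 (by rw [hg1, hpar, h])
          · have hpar2 : (a + 1 - s.card) % 2 = 1 := by omega
            exact grundy_spec hmv2 (by rw [hg2, hpar2, h])
      · -- degenerate case : a = k-2, the second option is the special position
        have ha2 : a = s.card - 2 := by omega
        have hg1' : grundy (insert (a + 1) (s.erase b)) = 0 := by rw [hg1]; omega
        have hks : s.card ∉ s := by
          intro h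
          have := haub _ h (by omega)
          omega
        have hmv2 : MWMove s (insert s.card (s.erase b)) := move_mk hs (by omega) hks
        have hg2 : grundy (insert s.card (s.erase b)) = 1 := by
          have htne : (insert s.card (s.erase b)).Nonempty :=
            ⟨s.card, Finset.mem_insert_self _ _⟩
          have hmax : (insert s.card (s.erase b)).max' htne = s.card := by
            refine max'_eq_of htne (Finset.mem_insert_self _ _) ?_
            intro x hx
            rcases Finset.mem_insert.mp hx with rfl | hx
            · omega
            · have := Finset.le_max' _ x hx; omega
          have hsums : (insert s.card (s.erase b)).sum id < n := by
            have := hmv2.sum_lt; omega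
          have IHt := IH _ hsums htne (by rw [hmv2.card_eq]; omega)
          rw [hmax, hmv2.card_eq] at IHt
          have hnc : s.card - 1 ∉ insert s.card (s.erase b) := by
            rw [mem_target]
            rintro (h | ⟨h1, h2⟩)
            · omega
            · have := haub _ h1 (by omega)
              omega
          exact IHt.2.1 hnc rfl
        constructor
        · intro h
          exact grundy_spec hmv1 (by rw [hg1', h])
        · intro h
          exact grundy_spec hmv2 (by rw [hg2, h])
theorem MWmain' (s : Finset ℕ) (hs : s.Nonempty) (hcard : 2 ≤ s.card) :
    ((s.max' hs - 1 ∈ s → grundy s = (s.max' hs + 1 - s.card) % 2) ∧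
     (s.max' hs - 1 ∉ s → s.max' hs = s.card → grundy s = 1) ∧
     (s.max' hs - 1 ∉ s → s.max' hs ≠ s.card → grundy s ≠ 0 ∧ grundy s ≠ 1)) :=
  MWmain (s.sum id + 1) s (Nat.lt_succ_self _) hs hcard

/-- Every non-terminal position with at least two coins has an option of
Grundy value 0 or 1. -/
theorem MWkey (s : Finset ℕ) (hcard : 2 ≤ s.card) (hnt : ¬ ∀ t, ¬ MWMove s t) :
    ∃ t, MWMove s t ∧ grundy t ≤ 1 := by
  have hs : s.Nonempty := Finset.card_pos.mp (by omega)
  have hbmem : s.max' hs ∈ s := s.max'_mem hs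
  have hble : ∀ x ∈ s, x ≤ s.max' hs := fun x hx => Finset.le_max' s x hx
  have hb1 : 1 ≤ s.max' hs := max'_pos hs hcard
  push_neg at hnt
  obtain ⟨t0, hmv0⟩ := hnt
  obtain ⟨hs', j, hj, hjs, rfl⟩ := hmv0
  by_cases hbm1 : s.max' hs - 1 ∈ s
  · -- consecutive case
    have hbk : s.card ≤ s.max' hs := card_le_max'_of_missing hs hj hjs
    have comp : ∀ j', j' < s.max' hs → j' ∉ s →
        (s.max' hs - 2 = j' ∨ s.max' hs - 2 ∈ s) →
        grundy (insert j' (s.erase (s.max' hs))) ≤ 1 := by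
      intro j' hj' hj's hcase
      have htne : (insert j' (s.erase (s.max' hs))).Nonempty :=
        ⟨j', Finset.mem_insert_self _ _⟩
      have hmv : MWMove s (insert j' (s.erase (s.max' hs))) := move_mk hs hj' hj's
      have hmem1 : s.max' hs - 1 ∈ insert j' (s.erase (s.max' hs)) := by
        rw [mem_target]; right; exact ⟨hbm1, by omega⟩
      have hub : ∀ x ∈ insert j' (s.erase (s.max' hs)), x ≤ s.max' hs - 1 := by
        intro x hx
        rw [mem_target] at hx
        rcases hx with rfl | ⟨hxs, hxb⟩
        · omega
        · have := hble x hxs; omega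
      have hmax : (insert j' (s.erase (s.max' hs))).max' htne = s.max' hs - 1 :=
        max'_eq_of htne hmem1 hub
      have IHt := MWmain' _ htne (by rw [hmv.card_eq]; omega)
      rw [hmax] at IHt
      have hb2m : s.max' hs - 1 - 1 ∈ insert j' (s.erase (s.max' hs)) := by
        rw [mem_target]
        rcases hcase with h | h
        · left; omega
        · right; exact ⟨h, by omega⟩
      rw [IHt.1 hb2m]
      omega
    by_cases hb2 : s.max' hs - 2 ∈ s
    · exact ⟨insert j (s.erase (s.max' hs)), move_mk hs hj hjs, comp j hj hjs (Or.inr hb2)⟩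
    · exact ⟨insert (s.max' hs - 2) (s.erase (s.max' hs)), move_mk hs (by omega) hb2,
        comp _ (by omega) hb2 (Or.inl rfl)⟩
  · -- gap at the top : move onto the successor of the second maximum
    have hene : (s.erase (s.max' hs)).Nonempty := by
      rw [← Finset.card_pos, Finset.card_erase_of_mem hbmem]
      omega
    have hamem' : (s.erase (s.max' hs)).max' hene ∈ s.erase (s.max' hs) :=
      (s.erase (s.max' hs)).max'_mem hene
    set a := (s.erase (s.max' hs)).max' hene with hadef
    have hams : a ∈ s := Finset.mem_of_mem_erase hamem'
    have hanb : a ≠ s.max' hs := (Finset.mem_erase.mp hamem').1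
    have haub : ∀ x ∈ s, x ≠ s.max' hs → x ≤ a := fun x hx hxb =>
      Finset.le_max' _ x (Finset.mem_erase.mpr ⟨hxb, hx⟩)
    have halt : a < s.max' hs := lt_of_le_of_ne (hble a hams) hanb
    have hanb1 : a ≠ s.max' hs - 1 := fun h => hbm1 (h ▸ hams)
    have ha1s : a + 1 ∉ s := fun h => by have := haub _ h (by omega); omega
    have hmv1 : MWMove s (insert (a + 1) (s.erase (s.max' hs))) :=
      move_mk hs (by omega) ha1s
    refine ⟨insert (a + 1) (s.erase (s.max' hs)), hmv1, ?_⟩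
    have htne : (insert (a + 1) (s.erase (s.max' hs))).Nonempty :=
      ⟨a + 1, Finset.mem_insert_self _ _⟩
    have hmax : (insert (a + 1) (s.erase (s.max' hs))).max' htne = a + 1 := by
      refine max'_eq_of htne (Finset.mem_insert_self _ _) ?_
      intro x hx
      rcases Finset.mem_insert.mp hx with rfl | hx
      · omega
      · have := Finset.le_max' _ x hx; omega
    have IHt := MWmain' _ htne (by rw [hmv1.card_eq]; omega)
    rw [hmax] at IHt
    have hconsec : a + 1 - 1 ∈ insert (a + 1) (s.erase (s.max' hs)) := by
      rw [Nat.add_sub_cancel]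
      exact Finset.mem_insert_of_mem hamem'
    rw [IHt.1 hconsec]
    omega

/-- Strong miserability, inductive form. -/
theorem MWmis : ∀ (n : ℕ) (s : Finset ℕ), s.sum id < n → 2 ≤ s.card →
    mgrundy s = (if grundy s = 0 then 1 else if grundy s = 1 then 0 else grundy s) := by
  intro n
  induction n with
  | zero => intro s h; exact absurd h (Nat.not_lt_zero _)
  | succ n IH =>
    intro s hsum hcard
    by_cases hterm : ∀ t, ¬ MWMove s t
    · rw [mgrundy_terminal hterm, grundy_terminal hterm]
      simp
    · have IHmove : ∀ t, MWMove s t →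
          mgrundy t = (if grundy t = 0 then 1 else if grundy t = 1 then 0 else grundy t) := by
        intro t hmv
        refine IH t (by have := hmv.sum_lt; omega) (by rw [hmv.card_eq]; exact hcard)
      by_cases hg0 : grundy s = 0
      · have hspec : ∀ t, MWMove s t → grundy t ≠ 0 := fun t hmv => hg0 ▸ grundy_spec hmv
        obtain ⟨t1, hmv1, hle⟩ := MWkey s hcard hterm
        have hgt1 : grundy t1 = 1 := by have := hspec t1 hmv1; omega
        have hmg1 : mgrundy t1 = 0 := by rw [IHmove t1 hmv1, hgt1]; simp
        have hms : mgrundy s = 1 := by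
          refine mgrundy_eq_of hterm 1 ?_ ?_
          · intro t hmv h
            rw [IHmove t hmv] at h
            have := hspec t hmv
            split_ifs at h <;> omega
          · intro v hv
            have hv0 : v = 0 := by omega
            exact ⟨t1, hmv1, by rw [hmg1, hv0]⟩
        rw [hms, hg0]
        simp
      · by_cases hg1 : grundy s = 1
        · have hspec : ∀ t, MWMove s t → grundy t ≠ 1 := fun t hmv => hg1 ▸ grundy_spec hmv
          have hms : mgrundy s = 0 := by
            refine mgrundy_eq_of hterm 0 ?_ (fun v hv => by omega)
            intro t hmv h
            rw [IHmove t hmv] at h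
            have := hspec t hmv
            split_ifs at h <;> omega
          rw [hms, hg1]
          simp
        · have hg2 : 2 ≤ grundy s := by omega
          have hspec : ∀ t, MWMove s t → grundy t ≠ grundy s := fun t hmv => grundy_spec hmv
          have hms : mgrundy s = grundy s := by
            refine mgrundy_eq_of hterm _ ?_ ?_
            · intro t hmv h
              rw [IHmove t hmv] at h
              have := hspec t hmv
              split_ifs at h <;> omega
            · intro v hv
              rcases Nat.lt_or_ge v 2 with h2 | h2
              · have hv01 : v = 0 ∨ v = 1 := by omega
                rcases hv01 with rfl | rfl
                · obtain ⟨t, hmv, hgt⟩ := grundy_lt_exists (show 1 < grundy s by omega)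
                  exact ⟨t, hmv, by rw [IHmove t hmv, hgt]; simp⟩
                · obtain ⟨t, hmv, hgt⟩ := grundy_lt_exists (show 0 < grundy s by omega)
                  exact ⟨t, hmv, by rw [IHmove t hmv, hgt]; simp⟩
              · obtain ⟨t, hmv, hgt⟩ := grundy_lt_exists hv
                exact ⟨t, hmv, by rw [IHmove t hmv, hgt]; split_ifs <;> omega⟩
          rw [hms]
          split_ifs <;> omega
/-- Max-Welter is strongly miserable. -/
theorem maxWelter_strongly_miserable (k : ℕ) (hk : 2 ≤ k) (a : Fin k → ℕ)
    (ha : StrictMono a) :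
    (grundy (Finset.image a Finset.univ) ≤ 1 →
      grundy (Finset.image a Finset.univ) + mgrundy (Finset.image a Finset.univ) = 1) ∧
    (2 ≤ grundy (Finset.image a Finset.univ) →
      mgrundy (Finset.image a Finset.univ) = grundy (Finset.image a Finset.univ)) := by
  have hcard : (Finset.image a Finset.univ).card = k := by
    rw [Finset.card_image_of_injective _ ha.injective, Finset.card_univ, Fintype.card_fin]
  have hmis := MWmis ((Finset.image a Finset.univ).sum id + 1) (Finset.image a Finset.univ)
    (Nat.lt_succ_self _) (by omega)
  constructor
  · intro hle
    rw [hmis]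
    split_ifs <;> omega
  · intro h2
    rw [hmis]
    split_ifs <;> omega
end
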